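/- arXiv:2104.13481 — 3 statements merged into one kernel-verified Lean document; each statement's English description precedes it below -/
import Mathlib

section
/- Let S be an inverse semigroup and β : N → S an idempotent-separating homomorphism from a semilattice of groups N satisfying the Peiffer identity λ_{β(n)}(n') = n n' n⁻¹ for all n, n' ∈ N (where λ is the crossed-module action). Then the set A = β⁻¹(E(S)) is contained in the center of N. -/
/-- An inverse semigroup: every element `s` has a (unique) inverse `s⁻¹`
with `s * s⁻¹ * s = s` and `s⁻¹ * s * s⁻¹ = s⁻¹`. -/
class InverseSemigroup (S : Type*) extends Semigroup S, Inv S where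
  mul_inv_mul : ∀ s : S, s * s⁻¹ * s = s
  inv_mul_inv : ∀ s : S, s⁻¹ * s * s⁻¹ = s⁻¹
  inv_unique : ∀ s t : S, s * t * s = s → t * s * t = t → t = s⁻¹

namespace InverseSemigroup

/-- The set of idempotents of a multiplicative structure. -/
def E (S : Type*) [Mul S] : Set S := {e | e * e = e}

/-- The natural partial order: `s ≤ t` iff `s = s * s⁻¹ * t`. -/
def nle {S : Type*} [Mul S] [Inv S] (s t : S) : Prop := s = s * s⁻¹ * t

/-- `r s = s * s⁻¹`. -/
def r {S : Type*} [Mul S] [Inv S] (s : S) : S := s * s⁻¹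

/-- A Clifford semigroup (semilattice of groups): idempotents are central. -/
def IsClifford (S : Type*) [Mul S] : Prop := ∀ e ∈ E S, ∀ s : S, e * s = s * e

end InverseSemigroup

open InverseSemigroup

/-!
If `β a` is idempotent then so is `β (a * a⁻¹) = β a * (β a)⁻¹ = β a`, so by the Peiffer identity
conjugation by `a` agrees with conjugation by the idempotent `a * a⁻¹`, which in a Clifford
semigroup is right multiplication by `a * a⁻¹`. Hence `a * n * a⁻¹ = n * a * a⁻¹`, and multiplying
on the right by `a` (using that `a⁻¹ * a` is central) gives `a * n = n * a`.
-/

namespace InverseSemigroup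

section Basic

variable {S : Type*} [InverseSemigroup S]

theorem inv_eq_self_of_mem_E {e : S} (he : e ∈ E S) : e⁻¹ = e := by
  have h : e * e * e = e := by rw [he, he]
  exact (inv_unique e e h h).symm

theorem mul_inv_mem_E (a : S) : a * a⁻¹ ∈ E S :=
  show a * a⁻¹ * (a * a⁻¹) = a * a⁻¹ by rw [mul_assoc, ← mul_assoc a⁻¹, inv_mul_inv]

theorem inv_mul_mem_E (a : S) : a⁻¹ * a ∈ E S :=
  show a⁻¹ * a * (a⁻¹ * a) = a⁻¹ * a by rw [← mul_assoc, inv_mul_inv]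

end Basic

section Hom

variable {S N : Type*} [InverseSemigroup S] [InverseSemigroup N] {β : N → S}

theorem map_inv_of_map_mul (hβ : ∀ m n : N, β (m * n) = β m * β n) (a : N) :
    β a⁻¹ = (β a)⁻¹ :=
  inv_unique _ _ (by rw [← hβ, ← hβ, mul_inv_mul]) (by rw [← hβ, ← hβ, inv_mul_inv])

theorem map_mul_inv_of_map_mem_E (hβ : ∀ m n : N, β (m * n) = β m * β n) {a : N}
    (ha : β a ∈ E S) : β (a * a⁻¹) = β a := by
  rw [hβ, map_inv_of_map_mul hβ, inv_eq_self_of_mem_E ha, ha]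

end Hom

namespace IsClifford

variable {N : Type*} [InverseSemigroup N]

theorem idempotent_conj_eq_mul (hN : IsClifford N) {e : N} (he : e ∈ E N) (n : N) :
    e * n * e⁻¹ = n * e := by
  rw [inv_eq_self_of_mem_E he, hN e he n, mul_assoc, he]

theorem commute_of_conj_eq_mul (hN : IsClifford N) {a n : N}
    (h : a * n * a⁻¹ = n * (a * a⁻¹)) : a * n = n * a :=
  calc a * n = a * (a⁻¹ * a * n) := by rw [← mul_assoc, ← mul_assoc, mul_inv_mul]
    _ = a * n * a⁻¹ * a := by rw [hN _ (inv_mul_mem_E a) n]; simp only [mul_assoc]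
    _ = n * a := by rw [h, mul_assoc, mul_inv_mul]

end IsClifford

end InverseSemigroup

theorem crossed_module_kernel_central_general {S N : Type*} [InverseSemigroup S] [InverseSemigroup N]
    (hN : IsClifford N)
    (β : N → S) (hβ : ∀ m n : N, β (m * n) = β m * β n)
    (lam : S → N → N)
    (hPeiffer : ∀ m n : N, lam (β m) n = m * n * m⁻¹) :
    ∀ a : N, β a ∈ E S → ∀ n : N, a * n = n * a := by
  intro a ha n
  have hconj : a * n * a⁻¹ = a * a⁻¹ * n * (a * a⁻¹)⁻¹ := by
    rw [← hPeiffer, ← hPeiffer, map_mul_inv_of_map_mem_E hβ ha]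
  exact hN.commute_of_conj_eq_mul (hconj.trans (hN.idempotent_conj_eq_mul (mul_inv_mem_E a) n))

/-- If `β : N → S` is an idempotent-separating homomorphism from a semilattice of
groups `N` to an inverse semigroup `S`, satisfying the Peiffer identity
`λ_{β(n)}(n') = n * n' * n⁻¹`, then `A = β⁻¹(E(S))` is contained in the center of `N`. -/
theorem crossed_module_kernel_central {S N : Type*} [InverseSemigroup S] [InverseSemigroup N]
    (hN : IsClifford N)
    (β : N → S) (hβ : ∀ m n : N, β (m * n) = β m * β n)
    (hsep : ∀ m ∈ E N, ∀ n ∈ E N, β m = β n → m = n)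
    (lam : S → N → N)
    (hPeiffer : ∀ m n : N, lam (β m) n = m * n * m⁻¹) :
    ∀ a : N, β a ∈ E S → ∀ n : N, a * n = n * a :=
  crossed_module_kernel_central_general hN β hβ lam hPeiffer
end

section
/- Let T be an inverse semigroup and c ∈ Z³_≤(T¹, A¹) an order-preserving 3-cocycle with values in a T-module A. Then for any t ∈ T and idempotents e, f ∈ E(T), one has c(e, t, f) = θ(e t f t⁻¹). -/
open InverseSemigroup

/-!
Order preservation lets one shrink an argument of `c` below another at the cost of multiplying
by the idempotent `θ (r (x * y * z))`. Evaluated at `(e, t, f, t⁻¹)` and shrunk this way, the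
cocycle identity becomes `X * c(e,t,f) * Y = Y * X` with `X = c(et, f, t⁻¹)` and
`Y = c(e, tf, t⁻¹) = c(e, t, ft⁻¹)`. Since `A` is commutative, `c(e,t,f)` fixes `Y * X`.
All of `c(e,t,f)`, `X`, `Y` have `a * a⁻¹ = θ(e t f t⁻¹)`, and in a commutative inverse
semigroup an element `a` fixing `b` with `a * a⁻¹ = b * b⁻¹` equals `b * b⁻¹`.
-/

namespace InverseSemigroup

variable {S : Type*} [InverseSemigroup S]

theorem mem_E_iff {e : S} : e ∈ E S ↔ e * e = e := Iff.rfl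

theorem inv_inv (s : S) : s⁻¹⁻¹ = s :=
  (inv_unique s⁻¹ s (inv_mul_inv s) (mul_inv_mul s)).symm

theorem r_mem_E (s : S) : r s ∈ E S := by
  rw [mem_E_iff, r, ← mul_assoc, mul_inv_mul]

theorem inv_mul_self_mem_E (s : S) : s⁻¹ * s ∈ E S := by
  simpa only [r, inv_inv] using r_mem_E s⁻¹

theorem r_of_mem_E {e : S} (he : e ∈ E S) : r e = e := by
  rw [r, inv_eq_self_of_mem_E he, he]

/-- `(e * f)⁻¹` equals `f * (e * f)⁻¹ * e` by uniqueness of inverses, and the latter is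
visibly idempotent. -/
theorem mul_mem_E {e f : S} (he : e ∈ E S) (hf : f ∈ E S) : e * f ∈ E S := by
  rw [mem_E_iff] at he hf ⊢
  have he' : ∀ x : S, e * (e * x) = e * x := fun x => by rw [← mul_assoc, he]
  have hf' : ∀ x : S, f * (f * x) = f * x := fun x => by rw [← mul_assoc, hf]
  set x := (e * f)⁻¹
  have hx : f * x * e = x := by
    apply inv_unique
    · calc e * f * (f * x * e) * (e * f) = e * f * x * (e * f) := by
            simp only [mul_assoc, he', hf']
        _ = e * f := mul_inv_mul _
    · calc f * x * e * (e * f) * (f * x * e) = f * (x * (e * f) * x) * e := by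
            simp only [mul_assoc, he', hf']
        _ = f * x * e := by rw [inv_mul_inv, mul_assoc]
  have hxx : x ∈ E S := by
    rw [mem_E_iff, ← hx]
    calc f * x * e * (f * x * e) = f * (x * (e * f) * x) * e := by simp only [mul_assoc]
      _ = f * x * e := by rw [inv_mul_inv, mul_assoc]
  rw [← inv_inv (e * f), inv_eq_self_of_mem_E hxx]
  exact hxx

theorem mul_comm_of_mem_E {e f : S} (he : e ∈ E S) (hf : f ∈ E S) : e * f = f * e := by
  have hef := mul_mem_E he hf
  have hfe := mul_mem_E hf he
  rw [mem_E_iff] at he hf hef hfe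
  have he' : ∀ x : S, e * (e * x) = e * x := fun x => by rw [← mul_assoc, he]
  have hf' : ∀ x : S, f * (f * x) = f * x := fun x => by rw [← mul_assoc, hf]
  have h : f * e = (e * f)⁻¹ := by
    apply inv_unique
    · calc e * f * (f * e) * (e * f) = e * f * (e * f) := by simp only [mul_assoc, he', hf']
        _ = e * f := hef
    · calc f * e * (e * f) * (f * e) = f * e * (f * e) := by simp only [mul_assoc, he', hf']
        _ = f * e := hfe
  rw [h, inv_eq_self_of_mem_E (mul_mem_E he hf)]

theorem mul_inv_rev (s t : S) : (s * t)⁻¹ = t⁻¹ * s⁻¹ := by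
  have hcomm : t * t⁻¹ * (s⁻¹ * s) = s⁻¹ * s * (t * t⁻¹) :=
    mul_comm_of_mem_E (r_mem_E t) (inv_mul_self_mem_E s)
  refine (inv_unique _ _ ?_ ?_).symm
  · calc s * t * (t⁻¹ * s⁻¹) * (s * t) = s * (t * t⁻¹ * (s⁻¹ * s) * t) := by
          simp only [mul_assoc]
      _ = s * (s⁻¹ * s * (t * t⁻¹ * t)) := by rw [hcomm]; simp only [mul_assoc]
      _ = s * t := by rw [mul_inv_mul, ← mul_assoc, ← mul_assoc, mul_inv_mul]
  · calc t⁻¹ * s⁻¹ * (s * t) * (t⁻¹ * s⁻¹)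
          = t⁻¹ * (s⁻¹ * s * (t * t⁻¹) * s⁻¹) := by
          simp only [mul_assoc]
      _ = t⁻¹ * (t * t⁻¹ * (s⁻¹ * s * s⁻¹)) := by rw [← hcomm]; simp only [mul_assoc]
      _ = t⁻¹ * s⁻¹ := by rw [inv_mul_inv, ← mul_assoc, ← mul_assoc, inv_mul_inv]

theorem r_mul (s t : S) : r (s * t) = s * r t * s⁻¹ := by
  simp only [r, mul_inv_rev, mul_assoc]

theorem r_mul_of_mem_E (s : S) {f : S} (hf : f ∈ E S) : r (s * f) = s * f * s⁻¹ := by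
  rw [r_mul, r_of_mem_E hf]

theorem r_mem_E_mul {e : S} (he : e ∈ E S) (s : S) : r (e * s) = e * r s := by
  rw [r_mul, inv_eq_self_of_mem_E he, mul_assoc, mul_comm_of_mem_E (r_mem_E s) he, ← mul_assoc,
    mem_E_iff.mp he]

theorem r_mul_mul_inv_of_mem_E (u t : S) {f : S} (hf : f ∈ E S) :
    r (u * t * f * t⁻¹) = r (u * t * f) := by
  have hcomm : f * (t⁻¹ * t) = t⁻¹ * t * f := mul_comm_of_mem_E hf (inv_mul_self_mem_E t)
  calc r (u * t * f * t⁻¹) = u * (t * (f * (t⁻¹ * t)) * f) * t⁻¹ * u⁻¹ := by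
        simp only [r, inv_inv, mul_inv_rev, inv_eq_self_of_mem_E hf, mul_assoc]
    _ = u * (t * (t⁻¹ * t) * (f * f)) * t⁻¹ * u⁻¹ := by rw [hcomm]; simp only [mul_assoc]
    _ = u * t * f * (u * t)⁻¹ := by
        rw [← mul_assoc t t⁻¹ t, mul_inv_mul, mem_E_iff.mp hf, mul_inv_rev]
        simp only [mul_assoc]
    _ = r (u * t * f) := (r_mul_of_mem_E _ hf).symm

theorem nle_refl (s : S) : nle s s := (mul_inv_mul s).symm

theorem nle_mem_E_mul {e : S} (he : e ∈ E S) (s : S) : nle (e * s) s := by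
  change e * s = r (e * s) * s
  rw [r_mem_E_mul he, r, mul_assoc e, mul_inv_mul]

theorem nle_mul_mem_E {e : S} (he : e ∈ E S) (s : S) : nle (s * e) s := by
  change s * e = r (s * e) * s
  rw [r_mul_of_mem_E s he, mul_assoc, mul_assoc, mul_comm_of_mem_E he (inv_mul_self_mem_E s),
    ← mul_assoc, ← mul_assoc, mul_inv_mul]

theorem r_mul_of_comm (hcomm : ∀ a b : S, a * b = b * a) (a b : S) :
    r (a * b) = r a * r b := by
  rw [r_mul, mul_assoc, hcomm (r b), ← mul_assoc]
  rfl

theorem eq_r_of_mul_eq_of_r_eq (hcomm : ∀ a b : S, a * b = b * a) {a b : S} (hab : a * b = b)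
    (hr : r a = r b) : a = r b :=
  calc a = a * r a := by rw [r, hcomm a, mul_inv_mul]
    _ = r b := by rw [hr, r, ← mul_assoc, hab]

end InverseSemigroup

section Cochain

variable {T A : Type*} [InverseSemigroup T] [InverseSemigroup A]

theorem cochain_eq_mul_of_nle {θ : T → A} {c : T → T → T → A}
    (hc : ∀ x y z : T, c x y z * (c x y z)⁻¹ = θ (r (x * y * z)))
    (hop : ∀ x x' y y' z z' : T, nle x x' → nle y y' → nle z z' →
      nle (c x y z) (c x' y' z'))
    {x x' y y' z z' : T} (hx : nle x x') (hy : nle y y') (hz : nle z z') :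
    c x y z = θ (r (x * y * z)) * c x' y' z' := by
  rw [← hc]
  exact hop x x' y y' z z' hx hy hz

theorem cochain_mem_E_mul_left {θ : T → A} {c : T → T → T → A}
    (hθmul : ∀ e ∈ E T, ∀ f ∈ E T, θ (e * f) = θ e * θ f)
    (hc : ∀ x y z : T, c x y z * (c x y z)⁻¹ = θ (r (x * y * z)))
    (hop : ∀ x x' y y' z z' : T, nle x x' → nle y y' → nle z z' →
      nle (c x y z) (c x' y' z'))
    {e : T} (he : e ∈ E T) (x y z : T) :
    c (e * x) y z = θ e * c x y z := by
  rw [cochain_eq_mul_of_nle hc hop (nle_mem_E_mul he x) (nle_refl y) (nle_refl z),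
    mul_assoc e, mul_assoc e, r_mem_E_mul he, hθmul e he _ (r_mem_E _), mul_assoc,
    ← cochain_eq_mul_of_nle hc hop (nle_refl x) (nle_refl y) (nle_refl z)]

end Cochain

theorem cocycle_idempotent_middle_general {T A : Type*} [InverseSemigroup T] [InverseSemigroup A]
    (θ : T → A) (η : T → A → A)
    (hAcomm : ∀ a b : A, a * b = b * a)
    (hθE : ∀ e ∈ E T, θ e ∈ E A)
    (hθmul : ∀ e ∈ E T, ∀ f ∈ E T, θ (e * f) = θ e * θ f)
    (hη1 : ∀ e ∈ E T, ∀ a : A, η e a = θ e * a)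
    (c : T → T → T → A)
    (hc : ∀ x y z : T, c x y z * (c x y z)⁻¹ = θ (r (x * y * z)))
    (hcoc : ∀ x y z w : T,
      η x (c y z w) * c x y z * c x (y * z) w = c x y (z * w) * c (x * y) z w)
    (hop : ∀ x x' y y' z z' : T, nle x x' → nle y y' → nle z z' →
      nle (c x y z) (c x' y' z'))
    : ∀ t : T, ∀ e ∈ E T, ∀ f ∈ E T, c e t f = θ (e * t * f * t⁻¹) := by
  intro t e he f hf
  have hX : η e (c t f t⁻¹) = c (e * t) f t⁻¹ := by
    rw [hη1 e he, cochain_mem_E_mul_left hθmul hc hop he]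
  have hY : c e (t * f) t⁻¹ = c e t (f * t⁻¹) := by
    rw [cochain_eq_mul_of_nle hc hop (nle_refl e) (nle_mul_mem_E hf t) (nle_refl t⁻¹),
      cochain_eq_mul_of_nle hc hop (nle_refl e) (nle_refl t) (nle_mem_E_mul hf t⁻¹)]
    simp only [mul_assoc]
  have hcocycle := hcoc e t f t⁻¹
  rw [hX, hY] at hcocycle
  set X := c (e * t) f t⁻¹
  set Y := c e t (f * t⁻¹)
  have hfix : c e t f * (Y * X) = Y * X :=
    calc c e t f * (Y * X) = X * c e t f * Y := by
          rw [hAcomm Y, ← mul_assoc, hAcomm (c e t f)]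
      _ = Y * X := hcocycle
  have hr : r (e * t * f) = e * t * f * t⁻¹ := by
    rw [mul_assoc e, r_mem_E_mul he, r_mul_of_mem_E t hf]
    simp only [mul_assoc]
  have hr' : r (e * t * f * t⁻¹) = e * t * f * t⁻¹ := by
    rw [r_mul_mul_inv_of_mem_E e t hf, hr]
  set ρ := θ (e * t * f * t⁻¹)
  have hρ : ρ * ρ = ρ := hθE _ (hr' ▸ r_mem_E _)
  have hrX : r X = ρ := (hc _ _ _).trans (by rw [hr'])
  have hrY : r Y = ρ := (hc _ _ _).trans (by rw [← mul_assoc, hr'])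
  have hrYX : r (Y * X) = ρ := by rw [r_mul_of_comm hAcomm, hrX, hrY, hρ]
  calc c e t f = r (Y * X) :=
        eq_r_of_mul_eq_of_r_eq hAcomm hfix ((hc e t f).trans (by rw [hr, hrYX]))
    _ = ρ := hrYX

/-- For an order-preserving 3-cocycle `c`, one has `c(e,t,f) = θ(e t f t⁻¹)` for
idempotents `e, f`. -/
theorem cocycle_idempotent_middle {T A : Type*} [InverseSemigroup T] [InverseSemigroup A]
    (θ : T → A) (η : T → A → A)
    (hAcomm : ∀ a b : A, a * b = b * a)
    (hθE : ∀ e ∈ E T, θ e ∈ E A)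
    (hθinj : ∀ e ∈ E T, ∀ f ∈ E T, θ e = θ f → e = f)
    (hθsurj : ∀ a ∈ E A, ∃ e ∈ E T, θ e = a)
    (hθmul : ∀ e ∈ E T, ∀ f ∈ E T, θ (e * f) = θ e * θ f)
    (hηhom : ∀ t u : T, ∀ a : A, η (t * u) a = η t (η u a))
    (hηmul : ∀ t : T, ∀ a b : A, η t (a * b) = η t a * η t b)
    (hη1 : ∀ e ∈ E T, ∀ a : A, η e a = θ e * a)
    (hη2 : ∀ t : T, ∀ e ∈ E T, η t (θ e) = θ (t * e * t⁻¹))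
    (c : T → T → T → A)
    (hc : ∀ x y z : T, c x y z * (c x y z)⁻¹ = θ (r (x * y * z)))
    (hcoc : ∀ x y z w : T,
      η x (c y z w) * c x y z * c x (y * z) w = c x y (z * w) * c (x * y) z w)
    (hop : ∀ x x' y y' z z' : T, nle x x' → nle y y' → nle z z' →
      nle (c x y z) (c x' y' z'))
    : ∀ t : T, ∀ e ∈ E T, ∀ f ∈ E T, c e t f = θ (e * t * f * t⁻¹) :=
  cocycle_idempotent_middle_general θ η hAcomm hθE hθmul hη1 c hc hcoc hop
end

section
/- With ξ_t as defined from a strongly normalized 3-cocycle c, for every t ∈ T, u ∈ F(T ⊔ T⁻¹) and v ∈ F(T ⊔ T⁻¹)¹, one has ξ_t(uv) = ξ_t(u) · ξ_t([φ(u)]v), where by convention ξ_t([φ(u)]v) = θ(r(t φ(u))) when v is empty. -/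
open InverseSemigroup

/-- The value in `T` of the letter `(x, true) = [x]` or `(x, false) = [x]⁻¹`. -/
def letterVal {T : Type*} [InverseSemigroup T] (p : T × Bool) : T :=
  if p.2 then p.1 else p.1⁻¹

/-- The evaluation `φ` in `T` of a nonempty word `p :: l` over `T ⊔ T⁻¹`. -/
def wordVal {T : Type*} [InverseSemigroup T] (p : T × Bool) (l : List (T × Bool)) : T :=
  l.foldl (fun acc q => acc * letterVal q) (letterVal p)

/-!
Reading a word from the left, the recursion defining `ξ_t` absorbs the second letter into
the first at each step, producing a factor that does not depend on the rest of the word.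
Hence `ξ_t(uv)` is the product of the factors met while absorbing `u`, which is `ξ_t(u)`
up to its final idempotent `θ(r(t φ(u)))`, times `ξ_t([φ(u)]v)`. That idempotent is
harmless: `ξ_t([x]v)` is fixed by `θ(r(t x))` on the left, because the factors commute
and `r(t x) ≥ r(t x y)` for all `y`.
-/

namespace InverseSemigroup

variable {S : Type*} [InverseSemigroup S]

theorem r_mul_r_self (s : S) : r s * r s = r s := by
  rw [r, ← mul_assoc, mul_inv_mul]

theorem r_mul_r_mul (s u : S) : r s * r (s * u) = r (s * u) := by
  simp only [r, ← mul_assoc, mul_inv_mul]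

variable {A : Type*} [Mul A] {θ : S → A}

theorem map_r_mul_self (hθ : ∀ e ∈ E S, ∀ f ∈ E S, θ (e * f) = θ e * θ f) (s : S) :
    θ (r s) * θ (r s) = θ (r s) := by
  rw [← hθ _ (r_mul_r_self s) _ (r_mul_r_self s), r_mul_r_self]

theorem map_r_mul_map_r_mul (hθ : ∀ e ∈ E S, ∀ f ∈ E S, θ (e * f) = θ e * θ f) (s u : S) :
    θ (r s) * θ (r (s * u)) = θ (r (s * u)) := by
  rw [← hθ _ (r_mul_r_self s) _ (r_mul_r_self (s * u)), r_mul_r_mul]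

end InverseSemigroup

section Words

variable {T : Type*} [InverseSemigroup T]

theorem wordVal_true_nil (x : T) : wordVal (x, true) [] = x := by
  simp [wordVal, letterVal]

theorem wordVal_true_cons (x : T) (q : T × Bool) (l : List (T × Bool)) :
    wordVal (x, true) (q :: l) = wordVal (x * letterVal q, true) l := by
  simp [wordVal, letterVal]

theorem wordVal_false (x : T) (l : List (T × Bool)) :
    wordVal (x, false) l = wordVal (x⁻¹, true) l := by
  simp [wordVal, letterVal]

end Words

/-- The recursion defining `ξ_t` on nonempty words over `T ⊔ T⁻¹`. -/
structure XiRecursion {T A : Type*} [Mul T] [Inv T] [Mul A] [Inv A]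
    (θ : T → A) (c : T → T → T → A) (ξ : T → List (T × Bool) → A) : Prop where
  singleton : ∀ t x : T, ξ t [(x, true)] = θ (r (t * x))
  cons_inv : ∀ t x : T, ∀ u : List (T × Bool),
    ξ t ((x, false) :: u) = (c t x⁻¹ x)⁻¹ * ξ t ((x⁻¹, true) :: u)
  cons_cons : ∀ t x y : T, ∀ v : List (T × Bool),
    ξ t ((x, true) :: (y, true) :: v) = c t x y * ξ t ((x * y, true) :: v)
  cons_cons_inv : ∀ t x y : T, ∀ v : List (T × Bool),
    ξ t ((x, true) :: (y, false) :: v) = (c t (x * y⁻¹) y)⁻¹ * ξ t ((x * y⁻¹, true) :: v)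

/-- The factor produced when the letter `q` is absorbed into `[x]` in computing `ξ_t`. -/
def absorbFactor {T A : Type*} [Mul T] [Inv T] [Inv A]
    (c : T → T → T → A) (t x : T) (q : T × Bool) : A :=
  if q.2 then c t x q.1 else (c t (x * q.1⁻¹) q.1)⁻¹

namespace XiRecursion

variable {T A : Type*} [InverseSemigroup T] [Semigroup A] [Inv A]
  {θ : T → A} {c : T → T → T → A} {ξ : T → List (T × Bool) → A}

theorem cons_absorb (h : XiRecursion θ c ξ) (t x : T) (q : T × Bool) (v : List (T × Bool)) :
    ξ t ((x, true) :: q :: v) = absorbFactor c t x q * ξ t ((x * letterVal q, true) :: v) := by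
  obtain ⟨y, _ | _⟩ := q
  · exact h.cons_cons_inv t x y v
  · exact h.cons_cons t x y v

theorem map_r_mul_cons (h : XiRecursion θ c ξ) (hAcomm : ∀ a b : A, a * b = b * a)
    (hθ : ∀ e ∈ E T, ∀ f ∈ E T, θ (e * f) = θ e * θ f) (t x : T) (v : List (T × Bool)) :
    θ (r (t * x)) * ξ t ((x, true) :: v) = ξ t ((x, true) :: v) := by
  induction v generalizing x with
  | nil => rw [h.singleton, map_r_mul_self hθ]
  | cons q w ih =>
    rw [h.cons_absorb]
    have hr : θ (r (t * x)) * θ (r (t * (x * letterVal q))) = θ (r (t * (x * letterVal q))) := by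
      rw [← mul_assoc]; exact map_r_mul_map_r_mul hθ _ _
    set y := x * letterVal q
    calc θ (r (t * x)) * (absorbFactor c t x q * ξ t ((y, true) :: w))
        = absorbFactor c t x q * (θ (r (t * x)) * ξ t ((y, true) :: w)) := by
          rw [← mul_assoc, hAcomm (θ _), mul_assoc]
      _ = absorbFactor c t x q * ((θ (r (t * x)) * θ (r (t * y))) * ξ t ((y, true) :: w)) := by
          rw [mul_assoc, ih]
      _ = absorbFactor c t x q * ξ t ((y, true) :: w) := by rw [hr, ih]

theorem cons_mul_map_r_wordVal (h : XiRecursion θ c ξ)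
    (hθ : ∀ e ∈ E T, ∀ f ∈ E T, θ (e * f) = θ e * θ f) (t x : T) (l : List (T × Bool)) :
    ξ t ((x, true) :: l) = ξ t ((x, true) :: l) * θ (r (t * wordVal (x, true) l)) := by
  induction l generalizing x with
  | nil => rw [wordVal_true_nil, h.singleton, map_r_mul_self hθ]
  | cons q w ih => rw [wordVal_true_cons, h.cons_absorb, mul_assoc, ← ih]

theorem cons_append (h : XiRecursion θ c ξ) (hAcomm : ∀ a b : A, a * b = b * a)
    (hθ : ∀ e ∈ E T, ∀ f ∈ E T, θ (e * f) = θ e * θ f) (t x : T) (l : List (T × Bool))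
    (q : T × Bool) (m : List (T × Bool)) :
    ξ t ((x, true) :: l ++ q :: m) =
      ξ t ((x, true) :: l) * ξ t ((wordVal (x, true) l, true) :: q :: m) := by
  induction l generalizing x with
  | nil =>
    rw [wordVal_true_nil, h.singleton, List.singleton_append, h.map_r_mul_cons hAcomm hθ]
  | cons q' w ih =>
    rw [List.cons_append, List.cons_append, h.cons_absorb, ← List.cons_append, ih,
      wordVal_true_cons, h.cons_absorb t x q' w, mul_assoc]

end XiRecursion

theorem xi_multiplicative_general {T A : Type*} [InverseSemigroup T] [InverseSemigroup A]
    (θ : T → A)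
    (hAcomm : ∀ a b : A, a * b = b * a)
    (hθmul : ∀ e ∈ E T, ∀ f ∈ E T, θ (e * f) = θ e * θ f)
    (c : T → T → T → A)
    (ξ : T → List (T × Bool) → A)
    (hξ1 : ∀ t x : T, ξ t [(x, true)] = θ (r (t * x)))
    (hξ2 : ∀ t x : T, ∀ u : List (T × Bool),
      ξ t ((x, false) :: u) = (c t x⁻¹ x)⁻¹ * ξ t ((x⁻¹, true) :: u))
    (hξ3 : ∀ t x y : T, ∀ v : List (T × Bool),
      ξ t ((x, true) :: (y, true) :: v) = c t x y * ξ t ((x * y, true) :: v))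
    (hξ4 : ∀ t x y : T, ∀ v : List (T × Bool),
      ξ t ((x, true) :: (y, false) :: v) =
        (c t (x * y⁻¹) y)⁻¹ * ξ t ((x * y⁻¹, true) :: v))
    : (∀ t : T, ∀ p : T × Bool, ∀ l : List (T × Bool), ∀ q : T × Bool,
        ∀ m : List (T × Bool),
        ξ t ((p :: l) ++ (q :: m)) = ξ t (p :: l) * ξ t ((wordVal p l, true) :: q :: m)) ∧
      (∀ t : T, ∀ p : T × Bool, ∀ l : List (T × Bool),
        ξ t (p :: l) = ξ t (p :: l) * θ (r (t * wordVal p l))) := by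
  have h : XiRecursion θ c ξ := ⟨hξ1, hξ2, hξ3, hξ4⟩
  constructor
  · rintro t ⟨x, _ | _⟩ l q m
    · rw [List.cons_append, h.cons_inv, ← List.cons_append, h.cons_append hAcomm hθmul,
        wordVal_false, h.cons_inv, mul_assoc]
    · exact h.cons_append hAcomm hθmul t x l q m
  · rintro t ⟨x, _ | _⟩ l
    · rw [h.cons_inv, wordVal_false, mul_assoc, ← h.cons_mul_map_r_wordVal hθmul]
    · exact h.cons_mul_map_r_wordVal hθmul t x l

/-- Multiplicativity of `ξ_t`: `ξ_t(uv) = ξ_t(u) ξ_t([φ(u)]v)`, with the convention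
`ξ_t([φ(u)]v) = θ(r(t φ(u)))` when `v` is empty. -/
theorem xi_multiplicative {T A : Type*} [InverseSemigroup T] [InverseSemigroup A]
    (θ : T → A) (η : T → A → A)
    (hAcomm : ∀ a b : A, a * b = b * a)
    (hθE : ∀ e ∈ E T, θ e ∈ E A)
    (hθinj : ∀ e ∈ E T, ∀ f ∈ E T, θ e = θ f → e = f)
    (hθsurj : ∀ a ∈ E A, ∃ e ∈ E T, θ e = a)
    (hθmul : ∀ e ∈ E T, ∀ f ∈ E T, θ (e * f) = θ e * θ f)
    (hηhom : ∀ t u : T, ∀ a : A, η (t * u) a = η t (η u a))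
    (hηmul : ∀ t : T, ∀ a b : A, η t (a * b) = η t a * η t b)
    (hη1 : ∀ e ∈ E T, ∀ a : A, η e a = θ e * a)
    (hη2 : ∀ t : T, ∀ e ∈ E T, η t (θ e) = θ (t * e * t⁻¹))
    (c : T → T → T → A)
    (hc : ∀ x y z : T, c x y z * (c x y z)⁻¹ = θ (r (x * y * z)))
    (hcoc : ∀ x y z w : T,
      η x (c y z w) * c x y z * c x (y * z) w = c x y (z * w) * c (x * y) z w)
    (hop : ∀ x x' y y' z z' : T, nle x x' → nle y y' → nle z z' →
      nle (c x y z) (c x' y' z'))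
    (hsn : ∀ x y z : T, (x ∈ E T ∨ y ∈ E T ∨ z ∈ E T) →
      c x y z = θ (r (x * y * z)))
    (ξ : T → List (T × Bool) → A)
    (hξ1 : ∀ t x : T, ξ t [(x, true)] = θ (r (t * x)))
    (hξ2 : ∀ t x : T, ∀ u : List (T × Bool),
      ξ t ((x, false) :: u) = (c t x⁻¹ x)⁻¹ * ξ t ((x⁻¹, true) :: u))
    (hξ3 : ∀ t x y : T, ∀ v : List (T × Bool),
      ξ t ((x, true) :: (y, true) :: v) = c t x y * ξ t ((x * y, true) :: v))
    (hξ4 : ∀ t x y : T, ∀ v : List (T × Bool),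
      ξ t ((x, true) :: (y, false) :: v) =
        (c t (x * y⁻¹) y)⁻¹ * ξ t ((x * y⁻¹, true) :: v))
    : (∀ t : T, ∀ p : T × Bool, ∀ l : List (T × Bool), ∀ q : T × Bool,
        ∀ m : List (T × Bool),
        ξ t ((p :: l) ++ (q :: m)) = ξ t (p :: l) * ξ t ((wordVal p l, true) :: q :: m)) ∧
      (∀ t : T, ∀ p : T × Bool, ∀ l : List (T × Bool),
        ξ t (p :: l) = ξ t (p :: l) * θ (r (t * wordVal p l))) :=
  xi_multiplicative_general θ hAcomm hθmul c ξ hξ1 hξ2 hξ3 hξ4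
end
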